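/- arXiv:2204.02933 — 7 statements merged into one kernel-verified Lean document; each statement's English description precedes it below -/
import Mathlib

section
/- Let K ⊆ ℝ^k be compact and f(x) = dist(x, K). Let ε ≥ 0, δ > 0 with 2δ + ε < 1. Suppose x ∈ ℝ^k and 0 < r < dist(x, K), and there exist z₁, z₂ ∈ K with |x - zᵢ| ≤ dist(x, K) + ε·r for i = 1, 2. Suppose further that f is δ-coarsely differentiable on B(x, r), i.e., there is an affine function λ : ℝ^k → ℝ with |f(p) - λ(p)| ≤ δ·r for all p ∈ B(x, r). Then the angle θ between the segments [x, z₁] and [x, z₂] satisfies |θ| ≤ arccos(2·((1 - (2δ + ε))/(1 + 2δ))² - 1). -/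
/-!
Walk a distance `r` from `x` towards `z₁` and `z₂`, reaching `x + v₁` and `x + v₂`. Since the
`zᵢ` are almost nearest points of `K`, `f(x + vᵢ) ≤ f(x) - r + εr`; since `f` is 1-Lipschitz,
`f(x + (v₁ + v₂)/2) ≥ f(x) - ‖v₁ + v₂‖/2`. A function within `δr` of an affine map on the ball is
midpoint convex up to `2δr`, which forces `‖v₁ + v₂‖ ≥ 2r(1 - (2δ + ε))`, and for two vectors of
length `r` a long sum means a small angle.
-/

open Metric InnerProductGeometry

section Affine

variable {V P : Type*} [AddCommGroup V] [Module ℝ V] [AddTorsor V P]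

theorem le_midpoint_add_of_abs_sub_affineMap_le {f : P → ℝ} {g : P →ᵃ[ℝ] ℝ} {s : Set P} {η : ℝ}
    (hfg : ∀ p ∈ s, |f p - g p| ≤ η) {p₁ p₂ : P} (hp₁ : p₁ ∈ s) (hp₂ : p₂ ∈ s)
    (hm : midpoint ℝ p₁ p₂ ∈ s) :
    f (midpoint ℝ p₁ p₂) ≤ (f p₁ + f p₂) / 2 + 2 * η := by
  have hg : g (midpoint ℝ p₁ p₂) = (g p₁ + g p₂) / 2 := by
    rw [g.map_midpoint, midpoint_eq_smul_add, invOf_eq_inv, smul_eq_mul]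
    ring
  have h₁ := (abs_le.mp (hfg p₁ hp₁)).1
  have h₂ := (abs_le.mp (hfg p₂ hp₂)).1
  have h := (abs_le.mp (hfg _ hm)).2
  linarith

end Affine

section Normed

variable {E : Type*} [NormedAddCommGroup E] [NormedSpace ℝ E]

theorem dist_midpoint_add_add_left (x v w : E) :
    dist (midpoint ℝ (x + v) (x + w)) x = ‖v + w‖ / 2 := by
  rw [dist_eq_norm, midpoint_eq_smul_add, invOf_eq_inv,
    show (2 : ℝ)⁻¹ • (x + v + (x + w)) - x = (2 : ℝ)⁻¹ • (v + w) by module, norm_smul]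
  norm_num
  ring

theorem exists_pos_smul_infDist_le {K : Set E} {x z : E} (hz : z ∈ K) {r : ℝ} (hr : 0 < r)
    (hrz : r ≤ dist x z) :
    ∃ c : ℝ, 0 < c ∧ ‖c • (z - x)‖ = r ∧ infDist (x + c • (z - x)) K ≤ dist x z - r := by
  have hD : 0 < dist x z := hr.trans_le hrz
  have hc : r / dist x z ≤ 1 := (div_le_one hD).mpr hrz
  refine ⟨r / dist x z, by positivity, ?_, ?_⟩
  · rw [norm_smul, ← dist_eq_norm', Real.norm_of_nonneg (by positivity), div_mul_cancel₀ _ hD.ne']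
  calc infDist (x + (r / dist x z) • (z - x)) K
      ≤ dist (x + (r / dist x z) • (z - x)) z := infDist_le_dist_of_mem hz
    _ = ‖(1 - r / dist x z) • (x - z)‖ := by rw [dist_eq_norm]; congr 1; module
    _ = dist x z - r := by
      rw [norm_smul, Real.norm_of_nonneg (sub_nonneg.mpr hc), ← dist_eq_norm, sub_mul,
        div_mul_cancel₀ _ hD.ne', one_mul]

end Normed

section InnerProduct

variable {E : Type*} [NormedAddCommGroup E] [InnerProductSpace ℝ E]

theorem angle_le_arccos_of_mul_le_norm_add {v w : E} {r c : ℝ} (hv : ‖v‖ = r) (hw : ‖w‖ = r)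
    (hr : 0 < r) (hc : 0 ≤ c) (hvw : 2 * r * c ≤ ‖v + w‖) :
    angle v w ≤ Real.arccos (2 * c ^ 2 - 1) := by
  have hsq : ‖v + w‖ ^ 2 = 2 * r ^ 2 + 2 * inner ℝ v w := by
    rw [norm_add_sq_real, hv, hw]; ring
  rw [angle, hv, hw]
  refine Real.arccos_le_arccos ?_
  rw [le_div_iff₀ (by positivity)]
  nlinarith [mul_le_mul hvw hvw (by positivity) (norm_nonneg _)]

end InnerProduct

theorem angle_bound_of_coarse_differentiable_general (k : ℕ) (K : Set (EuclideanSpace ℝ (Fin k)))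
    (ε δ : ℝ) (hδ : 0 < δ) (hεδ : 2 * δ + ε < 1)
    (x : EuclideanSpace ℝ (Fin k)) (r : ℝ) (hr : 0 < r) (hrd : r < Metric.infDist x K)
    (z₁ z₂ : EuclideanSpace ℝ (Fin k)) (hz₁ : z₁ ∈ K) (hz₂ : z₂ ∈ K)
    (hd₁ : dist x z₁ ≤ Metric.infDist x K + ε * r)
    (hd₂ : dist x z₂ ≤ Metric.infDist x K + ε * r)
    (hcd : ∃ lam : EuclideanSpace ℝ (Fin k) →ᵃ[ℝ] ℝ,
      ∀ p ∈ Metric.closedBall x r, |Metric.infDist p K - lam p| ≤ δ * r) :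
    InnerProductGeometry.angle (z₁ - x) (z₂ - x) ≤
      Real.arccos (2 * ((1 - (2 * δ + ε)) / (1 + 2 * δ)) ^ 2 - 1) := by
  obtain ⟨lam, hlam⟩ := hcd
  obtain ⟨c₁, hc₁, hv₁, hf₁⟩ :=
    exists_pos_smul_infDist_le hz₁ hr (hrd.trans_le (infDist_le_dist_of_mem hz₁)).le
  obtain ⟨c₂, hc₂, hv₂, hf₂⟩ :=
    exists_pos_smul_infDist_le hz₂ hr (hrd.trans_le (infDist_le_dist_of_mem hz₂)).le
  set v₁ := c₁ • (z₁ - x)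
  set v₂ := c₂ • (z₂ - x)
  have mem_ball {v} (hv : ‖v‖ = r) : x + v ∈ closedBall x r := by
    rw [mem_closedBall, dist_self_add_left, hv]
  have hf_mid := le_midpoint_add_of_abs_sub_affineMap_le hlam (mem_ball hv₁) (mem_ball hv₂)
    ((convex_closedBall x r).midpoint_mem (mem_ball hv₁) (mem_ball hv₂))
  have hf_mid_ge := infDist_le_infDist_add_dist (s := K) (x := x) (y := midpoint ℝ (x + v₁) (x + v₂))
  rw [dist_comm, dist_midpoint_add_add_left] at hf_mid_ge
  have hmid_far : 2 * r * (1 - (2 * δ + ε)) ≤ ‖v₁ + v₂‖ := by linarith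
  rw [← angle_smul_left_of_pos _ _ hc₁, ← angle_smul_right_of_pos _ _ hc₂]
  refine (angle_le_arccos_of_mul_le_norm_add hv₁ hv₂ hr (by linarith) hmid_far).trans
    (Real.arccos_le_arccos ?_)
  have hq : (1 - (2 * δ + ε)) / (1 + 2 * δ) ≤ 1 - (2 * δ + ε) :=
    div_le_self (by linarith) (by linarith)
  gcongr

theorem angle_bound_of_coarse_differentiable (k : ℕ) (K : Set (EuclideanSpace ℝ (Fin k)))
    (hKc : IsCompact K) (hK : K.Nonempty)
    (ε δ : ℝ) (hε : 0 ≤ ε) (hδ : 0 < δ) (hεδ : 2 * δ + ε < 1)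
    (x : EuclideanSpace ℝ (Fin k)) (r : ℝ) (hr : 0 < r) (hrd : r < Metric.infDist x K)
    (z₁ z₂ : EuclideanSpace ℝ (Fin k)) (hz₁ : z₁ ∈ K) (hz₂ : z₂ ∈ K)
    (hd₁ : dist x z₁ ≤ Metric.infDist x K + ε * r)
    (hd₂ : dist x z₂ ≤ Metric.infDist x K + ε * r)
    (hcd : ∃ lam : EuclideanSpace ℝ (Fin k) →ᵃ[ℝ] ℝ,
      ∀ p ∈ Metric.closedBall x r, |Metric.infDist p K - lam p| ≤ δ * r) :
    InnerProductGeometry.angle (z₁ - x) (z₂ - x) ≤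
      Real.arccos (2 * ((1 - (2 * δ + ε)) / (1 + 2 * δ)) ^ 2 - 1) :=
  angle_bound_of_coarse_differentiable_general k K ε δ hδ hεδ x r hr hrd z₁ z₂ hz₁ hz₂ hd₁ hd₂ hcd
end

section
/- Under the hypotheses of the angle theorem (K compact, 2δ + ε < 1, 0 < r < dist(x, K), |x - zᵢ| ≤ dist(x, K) + ε·r, and f = dist(·, K) is δ-coarsely differentiable on B(x, r) via affine A = L + C), let y₁ ∈ [x, z₁] and y₂ ∈ [x, z₂] be the points at distance exactly r from x, and let wᵢ = x - yᵢ. Then L(wᵢ) ≥ r·(1 - (2δ + ε)) for i = 1, 2. -/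
theorem linear_part_lower_bound (k : ℕ) (K : Set (EuclideanSpace ℝ (Fin k)))
    (hKc : IsCompact K) (hK : K.Nonempty)
    (ε δ : ℝ) (hε : 0 ≤ ε) (hδ : 0 < δ) (hεδ : 2 * δ + ε < 1)
    (x : EuclideanSpace ℝ (Fin k)) (r : ℝ) (hr : 0 < r) (hrd : r < Metric.infDist x K)
    (z₁ z₂ : EuclideanSpace ℝ (Fin k)) (hz₁ : z₁ ∈ K) (hz₂ : z₂ ∈ K)
    (hd₁ : dist x z₁ ≤ Metric.infDist x K + ε * r)
    (hd₂ : dist x z₂ ≤ Metric.infDist x K + ε * r)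
    (L : EuclideanSpace ℝ (Fin k) →ₗ[ℝ] ℝ) (C : ℝ)
    (hA : ∀ p ∈ Metric.closedBall x r, |Metric.infDist p K - (L p + C)| ≤ δ * r)
    (y₁ y₂ : EuclideanSpace ℝ (Fin k))
    (hy₁ : y₁ ∈ segment ℝ x z₁) (hy₂ : y₂ ∈ segment ℝ x z₂)
    (hry₁ : dist x y₁ = r) (hry₂ : dist x y₂ = r) :
    L (x - y₁) ≥ r * (1 - (2 * δ + ε)) ∧ L (x - y₂) ≥ r * (1 - (2 * δ + ε)) := by
  have key : ∀ (z y : EuclideanSpace ℝ (Fin k)), z ∈ K →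
      dist x z ≤ Metric.infDist x K + ε * r → y ∈ segment ℝ x z → dist x y = r →
      L (x - y) ≥ r * (1 - (2 * δ + ε)) := by
    intro z y hz hd hy hry
    have hxball : x ∈ Metric.closedBall x r := Metric.mem_closedBall_self hr.le
    have hyball : y ∈ Metric.closedBall x r := by
      rw [Metric.mem_closedBall, dist_comm, hry]
    have hAx := hA x hxball
    have hAy := hA y hyball
    have hseg : dist x y + dist y z = dist x z := dist_add_dist_of_mem_segment hy
    have hfy : Metric.infDist y K ≤ Metric.infDist x K + ε * r - r := by
      have h1 : Metric.infDist y K ≤ dist y z := Metric.infDist_le_dist_of_mem hz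
      have h2 : dist y z = dist x z - r := by linarith
      linarith
    have h3 : L x + C ≥ Metric.infDist x K - δ * r := by
      rw [abs_le] at hAx; linarith
    have h4 : L y + C ≤ Metric.infDist y K + δ * r := by
      rw [abs_le] at hAy; linarith
    have : L (x - y) = (L x + C) - (L y + C) := by rw [map_sub]; ring
    rw [this]
    nlinarith
  exact ⟨key z₁ y₁ hz₁ hd₁ hy₁ hry₁, key z₂ y₂ hz₂ hd₂ hy₂ hry₂⟩
end

section
/- Let w₁, w₂ ∈ ℝ^k with ‖w₁‖ = ‖w₂‖ = r > 0, and let L : ℝ^k → ℝ be a linear map with operator norm at most 1 + 2δ. If L(w₁) ≥ r·(1 - (2δ + ε)) and L(w₂) ≥ r·(1 - (2δ + ε)) where 0 ≤ 2δ + ε < 1, then the angle θ between w₁ and w₂ satisfies cos θ ≥ 2·((1 - (2δ + ε))/(1 + 2δ))² - 1. -/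
/-!
Since `L` is bounded by `1 + 2δ` and is at least `2r(1 - (2δ + ε))` on `w₁ + w₂`, the diagonal
satisfies `‖w₁ + w₂‖ ≥ 2rc` with `c = (1 - (2δ + ε)) / (1 + 2δ)`. For vectors of common norm `r`,
`‖w₁ + w₂‖² = 2r²(1 + cos θ)`, so `cos θ ≥ 2c² - 1`.
-/

open InnerProductGeometry

section

variable {V : Type*} [NormedAddCommGroup V] [InnerProductSpace ℝ V]

theorem norm_add_sq_eq_of_norm_eq {x y : V} {r : ℝ} (hx : ‖x‖ = r) (hy : ‖y‖ = r) :
    ‖x + y‖ ^ 2 = 2 * r ^ 2 * (1 + Real.cos (angle x y)) := by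
  rw [norm_add_sq_real, ← cos_angle_mul_norm_mul_norm, hx, hy]
  ring

theorem two_mul_sq_sub_one_le_cos_angle {x y : V} {r c : ℝ} (hr : 0 < r) (hx : ‖x‖ = r)
    (hy : ‖y‖ = r) (hc : 0 ≤ c) (h : 2 * r * c ≤ ‖x + y‖) :
    2 * c ^ 2 - 1 ≤ Real.cos (angle x y) := by
  have hsq : (2 * r * c) ^ 2 ≤ 2 * r ^ 2 * (1 + Real.cos (angle x y)) := by
    rw [← norm_add_sq_eq_of_norm_eq hx hy]
    exact pow_le_pow_left₀ (by positivity) h 2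
  have hr2 : 0 < 2 * r ^ 2 := by positivity
  nlinarith

end

theorem cos_angle_lower_bound_general (k : ℕ) (w₁ w₂ : EuclideanSpace ℝ (Fin k)) (r : ℝ)
    (hr : 0 < r) (h₁ : ‖w₁‖ = r) (h₂ : ‖w₂‖ = r)
    (L : EuclideanSpace ℝ (Fin k) →ₗ[ℝ] ℝ) (δ ε : ℝ)
    (hεδ : 2 * δ + ε < 1)
    (hL : ∀ v : EuclideanSpace ℝ (Fin k), |L v| ≤ (1 + 2 * δ) * ‖v‖)
    (hw₁ : L w₁ ≥ r * (1 - (2 * δ + ε))) (hw₂ : L w₂ ≥ r * (1 - (2 * δ + ε))) :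
    Real.cos (InnerProductGeometry.angle w₁ w₂) ≥
      2 * ((1 - (2 * δ + ε)) / (1 + 2 * δ)) ^ 2 - 1 := by
  set a := 1 - (2 * δ + ε)
  set C := 1 + 2 * δ
  have ha : 0 < a := by linarith
  have hC : 0 < C := by
    have : r * a ≤ C * r := by
      linarith [le_abs_self (L w₁), h₁ ▸ hL w₁]
    nlinarith
  have hsum : 2 * r * a ≤ C * ‖w₁ + w₂‖ := by
    linarith [map_add L w₁ w₂, le_abs_self (L (w₁ + w₂)), hL (w₁ + w₂)]
  refine two_mul_sq_sub_one_le_cos_angle hr h₁ h₂ (div_nonneg ha.le hC.le) ?_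
  rw [← mul_div_assoc, div_le_iff₀ hC]
  linarith

theorem cos_angle_lower_bound (k : ℕ) (w₁ w₂ : EuclideanSpace ℝ (Fin k)) (r : ℝ)
    (hr : 0 < r) (h₁ : ‖w₁‖ = r) (h₂ : ‖w₂‖ = r)
    (L : EuclideanSpace ℝ (Fin k) →ₗ[ℝ] ℝ) (δ ε : ℝ) (hδ : 0 < δ) (hε : 0 ≤ ε)
    (hεδ : 2 * δ + ε < 1)
    (hL : ∀ v : EuclideanSpace ℝ (Fin k), |L v| ≤ (1 + 2 * δ) * ‖v‖)
    (hw₁ : L w₁ ≥ r * (1 - (2 * δ + ε))) (hw₂ : L w₂ ≥ r * (1 - (2 * δ + ε))) :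
    Real.cos (InnerProductGeometry.angle w₁ w₂) ≥
      2 * ((1 - (2 * δ + ε)) / (1 + 2 * δ)) ^ 2 - 1 :=
  cos_angle_lower_bound_general k w₁ w₂ r hr h₁ h₂ L δ ε hεδ hL hw₁ hw₂
end

section
/- For a nonempty closed set K ⊆ ℝ^k, the medial axis Med(K) = {p ∈ ℝ^k : there exist distinct x, y ∈ K with dist(p, K) = |p - x| = |p - y|} has Lebesgue measure zero. -/
/-!
`p ↦ infDist p K` is 1-Lipschitz, hence differentiable almost everywhere by Rademacher's theorem.
If `x ∈ K` is a closest point to `p`, then `infDist q K ^ 2 ≤ ‖q - x‖ ^ 2` with equality at `q = p`,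
so if `infDist · K` is differentiable at `p`, the two squares have the same derivative there,
namely `2 ⟪p - x, ·⟫`. This determines `x`, so points with two closest points are points of
non-differentiability.
-/

open Metric MeasureTheory Filter Topology

theorem HasFDerivAt.eq_of_eventuallyLE_of_eq {E : Type*} [NormedAddCommGroup E]
    [NormedSpace ℝ E] {f g : E → ℝ} {f' g' : E →L[ℝ] ℝ} {a : E}
    (hf : HasFDerivAt f f' a) (hg : HasFDerivAt g g' a) (hle : f ≤ᶠ[𝓝 a] g) (heq : f a = g a) :
    f' = g' := by
  have hmin : IsLocalMin (g - f) a := by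
    filter_upwards [hle] with q hq
    simp only [Pi.sub_apply, heq, sub_self, sub_nonneg, hq]
  exact (sub_eq_zero.mp (hmin.hasFDerivAt_eq_zero (hg.sub hf))).symm

section

variable {E : Type*} [NormedAddCommGroup E] [InnerProductSpace ℝ E]

def medialAxis (K : Set E) : Set E :=
  {p | ∃ x ∈ K, ∃ y ∈ K, x ≠ y ∧ infDist p K = dist p x ∧ infDist p K = dist p y}

theorem hasFDerivAt_infDist_sq_of_infDist_eq_dist {K : Set E} {p x : E} (hx : x ∈ K)
    (hpx : infDist p K = dist p x) (hdiff : DifferentiableAt ℝ (infDist · K) p) :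
    HasFDerivAt (infDist · K ^ 2) (2 • innerSL ℝ (p - x)) p := by
  have hdist_sq : HasFDerivAt (‖· - x‖ ^ 2) (2 • innerSL ℝ (p - x)) p := by
    simpa using ((hasFDerivAt_id p).sub_const x).norm_sq
  have hinfDist_sq := (hdiff.fun_pow 2).hasFDerivAt
  have hle : (infDist · K ^ 2) ≤ᶠ[𝓝 p] (‖· - x‖ ^ 2) := Eventually.of_forall fun q =>
    pow_le_pow_left₀ infDist_nonneg (dist_eq_norm q x ▸ infDist_le_dist_of_mem hx) 2
  have heq : infDist p K ^ 2 = ‖p - x‖ ^ 2 := by rw [hpx, dist_eq_norm]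
  rwa [hinfDist_sq.eq_of_eventuallyLE_of_eq hdist_sq hle heq] at hinfDist_sq

theorem eq_of_infDist_eq_dist_of_differentiableAt {K : Set E} {p x y : E} (hx : x ∈ K)
    (hy : y ∈ K) (hpx : infDist p K = dist p x) (hpy : infDist p K = dist p y)
    (hdiff : DifferentiableAt ℝ (infDist · K) p) : x = y := by
  have h := (hasFDerivAt_infDist_sq_of_infDist_eq_dist hx hpx hdiff).unique
    (hasFDerivAt_infDist_sq_of_infDist_eq_dist hy hpy hdiff)
  exact ext_inner_right ℝ fun v => by simpa using congr($h v)

theorem medialAxis_subset_not_differentiableAt (K : Set E) :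
    medialAxis K ⊆ {p | ¬DifferentiableAt ℝ (infDist · K) p} :=
  fun _ ⟨_, hx, _, hy, hxy, hpx, hpy⟩ hdiff =>
    hxy (eq_of_infDist_eq_dist_of_differentiableAt hx hy hpx hpy hdiff)

theorem addHaar_medialAxis [FiniteDimensional ℝ E] [MeasurableSpace E] [BorelSpace E]
    (μ : Measure E) [μ.IsAddHaarMeasure] (K : Set E) : μ (medialAxis K) = 0 :=
  measure_mono_null (medialAxis_subset_not_differentiableAt K)
    (ae_iff.mp (lipschitz_infDist_pt K).ae_differentiableAt)

end

theorem medial_axis_measure_zero_general (k : ℕ) (K : Set (EuclideanSpace ℝ (Fin k))) :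
    MeasureTheory.volume {p : EuclideanSpace ℝ (Fin k) |
      ∃ x ∈ K, ∃ y ∈ K, x ≠ y ∧
        Metric.infDist p K = dist p x ∧ Metric.infDist p K = dist p y} = 0 :=
  addHaar_medialAxis volume K

theorem medial_axis_measure_zero (k : ℕ) (K : Set (EuclideanSpace ℝ (Fin k)))
    (hK : K.Nonempty) (hKc : IsClosed K) :
    MeasureTheory.volume {p : EuclideanSpace ℝ (Fin k) |
      ∃ x ∈ K, ∃ y ∈ K, x ≠ y ∧
        Metric.infDist p K = dist p x ∧ Metric.infDist p K = dist p y} = 0 :=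
  medial_axis_measure_zero_general k K
end

section
/- Let K ⊆ ℝ^k be compact, f(x) = dist(x, K). If f is differentiable at p with p ∉ K, and z₁, z₂ ∈ K both satisfy |p - zᵢ| = dist(p, K), then z₁ = z₂. (Equivalently, the medial axis of K is contained in the set of non-differentiability points of f, off of K.) -/
open Metric Set

theorem unique_closest_point_of_differentiable (k : ℕ)
    (K : Set (EuclideanSpace ℝ (Fin k))) (hKc : IsCompact K) (hK : K.Nonempty)
    (p : EuclideanSpace ℝ (Fin k)) (hp : p ∉ K)
    (hdiff : DifferentiableAt ℝ (fun x : EuclideanSpace ℝ (Fin k) => Metric.infDist x K) p)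
    (z₁ z₂ : EuclideanSpace ℝ (Fin k)) (hz₁ : z₁ ∈ K) (hz₂ : z₂ ∈ K)
    (hd₁ : dist p z₁ = Metric.infDist p K) (hd₂ : dist p z₂ = Metric.infDist p K) :
    z₁ = z₂ := by
  set f : EuclideanSpace ℝ (Fin k) → ℝ := fun x => Metric.infDist x K with hf
  set d : ℝ := Metric.infDist p K with hd
  set L := fderiv ℝ f p with hL
  have hLnorm : ‖L‖ ≤ 1 := by
    simpa using norm_fderiv_le_of_lipschitz ℝ (lipschitz_infDist_pt K) (x₀ := p)
  -- key: for any closest point z, L (z - p) = -d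
  have key : ∀ z ∈ K, dist p z = d → L (z - p) = -d := by
    intro z hz hdz
    set v := z - p with hv
    have hvnorm : ‖v‖ = d := by
      rw [hv, ← hdz, dist_eq_norm, ← norm_neg]; congr 1; abel
    have hc : HasDerivAt (fun t : ℝ => p + t • v) v 0 := by
      simpa using ((hasDerivAt_id (0:ℝ)).smul_const v).const_add p
    have hcomp : HasDerivAt (fun t : ℝ => f (p + t • v)) (L v) 0 := by
      have hF : HasFDerivAt f L (p + (0:ℝ) • v) := by
        simpa using hdiff.hasFDerivAt
      exact hF.comp_hasDerivAt 0 hc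
    have h1 : HasDerivWithinAt (fun t : ℝ => f (p + t • v)) (L v) (Ici 0) 0 :=
      hcomp.hasDerivWithinAt
    have h2 : HasDerivWithinAt (fun t : ℝ => d - t * d) (-d) (Ici 0) 0 := by
      simpa using ((hasDerivAt_id (0:ℝ)).mul_const d).const_sub d |>.hasDerivWithinAt
    have heq : ∀ t ∈ Icc (0:ℝ) 1, f (p + t • v) = d - t * d := by
      intro t ht
      have hle : f (p + t • v) ≤ d - t * d := by
        have : f (p + t • v) ≤ dist (p + t • v) z := infDist_le_dist_of_mem hz
        refine this.trans_eq ?_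
        rw [dist_eq_norm]
        have : p + t • v - z = -((1 - t) • v) := by
          rw [hv]; module
        rw [this, norm_neg, norm_smul, Real.norm_eq_abs,
          abs_of_nonneg (by linarith [ht.2]), hvnorm]
        ring
      have hge : d - t * d ≤ f (p + t • v) := by
        have h3 : d ≤ f (p + t • v) + dist p (p + t • v) :=
          infDist_le_infDist_add_dist
        have h4 : dist p (p + t • v) = t * d := by
          rw [dist_eq_norm]
          have : p - (p + t • v) = -(t • v) := by abel
          rw [this, norm_neg, norm_smul, Real.norm_eq_abs, abs_of_nonneg ht.1, hvnorm]
        linarith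
      linarith
    have hmem : Icc (0:ℝ) 1 ∈ nhdsWithin (0:ℝ) (Ici 0) := by
      rw [show Icc (0:ℝ) 1 = Ici 0 ∩ Iic 1 from rfl]
      exact inter_mem_nhdsWithin _ (Iic_mem_nhds one_pos)
    have h2' : HasDerivWithinAt (fun t : ℝ => f (p + t • v)) (-d) (Ici 0) 0 := by
      refine h2.congr_of_eventuallyEq ?_ (by simpa using heq 0 (by norm_num))
      filter_upwards [hmem] with t ht using heq t ht
    have := h1.derivWithin (uniqueDiffOn_Ici 0 0 self_mem_Ici)
    rw [h2'.derivWithin (uniqueDiffOn_Ici 0 0 self_mem_Ici)] at this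
    exact this.symm
  have h1 : L (z₁ - p) = -d := key z₁ hz₁ hd₁
  have h2 : L (z₂ - p) = -d := key z₂ hz₂ hd₂
  have hdpos : 0 < d := (IsClosed.notMem_iff_infDist_pos hKc.isClosed hK).mp hp
  set v₁ := z₁ - p
  set v₂ := z₂ - p
  have hsum : L (v₁ + v₂) = -(2 * d) := by rw [map_add, h1, h2]; ring
  have hbound : 2 * d ≤ ‖v₁ + v₂‖ := by
    have := L.le_opNorm (v₁ + v₂)
    have habs : |L (v₁ + v₂)| ≤ ‖v₁ + v₂‖ := by
      calc |L (v₁ + v₂)| = ‖L (v₁ + v₂)‖ := rfl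
        _ ≤ ‖L‖ * ‖v₁ + v₂‖ := L.le_opNorm _
        _ ≤ 1 * ‖v₁ + v₂‖ := by
            exact mul_le_mul_of_nonneg_right hLnorm (norm_nonneg _)
        _ = ‖v₁ + v₂‖ := one_mul _
    rw [hsum, abs_neg, abs_of_nonneg (by positivity)] at habs
    exact habs
  have hn1 : ‖v₁‖ = d := by
    rw [show v₁ = z₁ - p from rfl, ← hd₁, dist_eq_norm, norm_sub_rev]
  have hn2 : ‖v₂‖ = d := by
    rw [show v₂ = z₂ - p from rfl, ← hd₂, dist_eq_norm, norm_sub_rev]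
  have hpar : ‖v₁ + v₂‖ ^ 2 + ‖v₁ - v₂‖ ^ 2 = 2 * (‖v₁‖ ^ 2 + ‖v₂‖ ^ 2) := by
    have := norm_add_sq_real v₁ v₂
    have h' := norm_sub_sq_real v₁ v₂
    rw [this, h']; ring
  have hzero : ‖v₁ - v₂‖ ^ 2 ≤ 0 := by
    have h4 : (2 * d) ^ 2 ≤ ‖v₁ + v₂‖ ^ 2 :=
      pow_le_pow_left₀ (by positivity) hbound 2
    rw [hn1, hn2] at hpar
    nlinarith
  have : v₁ - v₂ = 0 := by
    have := norm_nonneg (v₁ - v₂)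
    have hz0 : ‖v₁ - v₂‖ = 0 := by nlinarith
    exact norm_eq_zero.mp hz0
  have h5 : v₁ - v₂ = z₁ - z₂ := by
    show z₁ - p - (z₂ - p) = z₁ - z₂
    abel
  rw [h5] at this
  exact sub_eq_zero.mp this
end

section
/- Let K ⊆ ℝ^k be nonempty and closed, x ∉ K, and z a closest point of K to x. Then for every point y in the open segment (x, z), z is the unique closest point of K to y, and dist(y, K) = dist(x, K) - |x - y|. -/
theorem open_segment_unique_closest (k : ℕ) (K : Set (EuclideanSpace ℝ (Fin k)))
    (hK : K.Nonempty) (hKc : IsClosed K)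
    (x z : EuclideanSpace ℝ (Fin k)) (hx : x ∉ K) (hz : z ∈ K)
    (hclosest : dist x z = Metric.infDist x K)
    (y : EuclideanSpace ℝ (Fin k)) (hy : y ∈ openSegment ℝ x z) :
    Metric.infDist y K = dist y z ∧
      (∀ w ∈ K, dist y w = Metric.infDist y K → w = z) ∧
      Metric.infDist y K = Metric.infDist x K - dist x y := by
  rw [openSegment_eq_image_lineMap] at hy
  obtain ⟨t, ht, rfl⟩ := hy
  obtain ⟨ht0, ht1⟩ := ht
  set y := AffineMap.lineMap x z t with hy
  have h1 : dist y x = t * dist x z := by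
    rw [hy, dist_lineMap_left, Real.norm_eq_abs, abs_of_pos ht0]
  have h2 : dist y z = (1 - t) * dist x z := by
    rw [hy, dist_lineMap_right, Real.norm_eq_abs, abs_of_pos (by linarith)]
  have hkey : ∀ w ∈ K, (1 - t) * dist x z ≤ dist y w := by
    intro w hw
    have hdw : dist x z ≤ dist x w := hclosest ▸ Metric.infDist_le_dist_of_mem hw
    have htri : dist x w ≤ dist x y + dist y w := dist_triangle x y w
    rw [dist_comm x y, h1] at htri
    nlinarith
  have hinf : Metric.infDist y K = dist y z := by
    refine le_antisymm (Metric.infDist_le_dist_of_mem hz) ?_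
    rw [h2]
    have : Nonempty K := hK.to_subtype
    rw [Metric.infDist_eq_iInf]
    exact le_ciInf (fun w => hkey w w.2)
  refine ⟨hinf, ?_, ?_⟩
  · intro w hw hdw
    rw [hinf, h2] at hdw
    have hdxw : dist x w = dist x z := by
      have h1' : dist x z ≤ dist x w := hclosest ▸ Metric.infDist_le_dist_of_mem hw
      have htri : dist x w ≤ dist x y + dist y w := dist_triangle x y w
      rw [dist_comm x y, h1, hdw] at htri
      linarith
    have heq : dist x y + dist y w = dist x w := by
      rw [dist_comm x y, h1, hdw, hdxw]; ring
    have hseg : y ∈ segment ℝ x w := ((dist_add_dist_eq_iff).1 heq).mem_segment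
    rw [segment_eq_image_lineMap] at hseg
    obtain ⟨s, hs, hsy⟩ := hseg
    have hdpos : 0 < dist x z := dist_pos.2 (fun h => hx (h ▸ hz))
    have hds : dist y x = s * dist x w := by
      rw [← hsy, dist_lineMap_left, Real.norm_eq_abs, abs_of_nonneg hs.1]
    have hst : s = t := by
      rw [h1, hdxw] at hds
      have := mul_right_cancel₀ (ne_of_gt hdpos) (hds.symm.trans rfl)
      linarith [this]
    rw [hst] at hsy
    have : t • (w -ᵥ x) = t • (z -ᵥ x) := by
      have := hsy
      simp only [AffineMap.lineMap_apply] at this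
      exact vadd_right_cancel x this
    have hwz : w -ᵥ x = z -ᵥ x := smul_right_injective _ (ne_of_gt ht0) this
    exact vsub_left_cancel hwz
  · rw [hinf, h2, dist_comm x y, h1, hclosest]; ring
end

section
/- Let K ⊆ ℝ^k be compact and suppose p ∈ ℝ^k has two distinct closest points z₁ ≠ z₂ in K, with the angle θ₀ > 0 between [p, z₁] and [p, z₂]. Then for every δ > 0 with 2δ < 1 and arccos(2·((1-2δ)/(1+2δ))² - 1) < θ₀, and every 0 < r < dist(p, K), the function f = dist(·, K) is not δ-coarsely differentiable on B(p, r). -/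
/-!
Let `a` be an affine map within `δ r` of `f = infDist · K` on `closedBall p r`, with linear
part `L`. Since `f` is 1-Lipschitz, `|L v| ≤ (1 + 2δ) ‖v‖`; since `f` decreases at unit rate
along the segment from `p` to a closest point `zᵢ`, `L (zᵢ - p) ≤ -(1 - 2δ) ‖zᵢ - p‖`. Applying
both to the sum `u₁ + u₂` of the unit vectors towards `z₁, z₂` gives
`‖u₁ + u₂‖ ≥ 2 (1 - 2δ) / (1 + 2δ)`, and `‖u₁ + u₂‖² = 2 + 2 cos θ₀` turns this into
`θ₀ ≤ arccos (2 ((1 - 2δ) / (1 + 2δ))² - 1)`.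
-/

open Metric InnerProductGeometry
open scoped RealInnerProductSpace

section Approximation

variable {E : Type*} [NormedAddCommGroup E] [NormedSpace ℝ E]
  {f : E → ℝ} {a : E →ᵃ[ℝ] ℝ} {p : E} {r : ℝ}

theorem abs_sub_sub_linear_le_of_approx {ε : ℝ} (h : ∀ q ∈ closedBall p r, |f q - a q| ≤ ε)
    {v : E} (hv : ‖v‖ ≤ r) : |f (p + v) - f p - a.linear v| ≤ 2 * ε := by
  have hp : p ∈ closedBall p r := mem_closedBall_self ((norm_nonneg v).trans hv)
  have hpv : p + v ∈ closedBall p r := by rwa [mem_closedBall, dist_self_add_left]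
  have hlin : a.linear v = a (p + v) - a p := by
    rw [add_comm, ← vadd_eq_add, a.map_vadd, vadd_eq_add, add_sub_cancel_right]
  calc |f (p + v) - f p - a.linear v| = |(f (p + v) - a (p + v)) - (f p - a p)| := by
        rw [hlin]; ring_nf
    _ ≤ |f (p + v) - a (p + v)| + |f p - a p| := abs_sub _ _
    _ ≤ 2 * ε := by linarith [h _ hpv, h _ hp]

theorem abs_linear_le_of_approx {δ : ℝ} (hf : LipschitzWith 1 f) (hr : 0 < r)
    (h : ∀ q ∈ closedBall p r, |f q - a q| ≤ δ * r) (v : E) :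
    |a.linear v| ≤ (1 + 2 * δ) * ‖v‖ := by
  rcases eq_or_ne v 0 with rfl | hv
  · simp
  set t := r / ‖v‖
  have ht : 0 < t := div_pos hr (norm_pos_iff.mpr hv)
  have htv : t * ‖v‖ = r := div_mul_cancel₀ r (norm_ne_zero_iff.mpr hv)
  have hnorm : ‖t • v‖ = r := by rw [norm_smul, Real.norm_of_nonneg ht.le, htv]
  have hlip : |f (p + t • v) - f p| ≤ r := by
    simpa [← Real.dist_eq, dist_comm p, dist_self_add_left, hnorm] using
      hf.dist_le_mul (p + t • v) p
  have happrox := abs_sub_sub_linear_le_of_approx h hnorm.le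
  have hscaled : t * |a.linear v| ≤ t * ((1 + 2 * δ) * ‖v‖) := by
    calc t * |a.linear v| = |a.linear (t • v)| := by
          rw [map_smul, smul_eq_mul, abs_mul, abs_of_pos ht]
      _ ≤ 2 * (δ * r) + r := by
          have := abs_le.mp happrox
          have := abs_le.mp hlip
          rw [abs_le]; constructor <;> linarith
      _ = t * ((1 + 2 * δ) * ‖v‖) := by rw [← htv]; ring
  exact le_of_mul_le_mul_left hscaled ht

theorem infDist_lineMap_le {s : Set E} {z : E} (hz : z ∈ s) (p : E) {t : ℝ} (ht : t ≤ 1) :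
    infDist (AffineMap.lineMap p z t) s ≤ (1 - t) * dist p z :=
  calc infDist (AffineMap.lineMap p z t) s ≤ dist (AffineMap.lineMap p z t) z :=
        infDist_le_dist_of_mem hz
    _ = (1 - t) * dist p z := by
        rw [dist_lineMap_right, Real.norm_of_nonneg (by linarith)]

theorem linear_sub_le_of_approx_infDist {δ : ℝ} {K : Set E} {z : E} (hz : z ∈ K)
    (hdz : dist p z = infDist p K) (hr : 0 < r) (hrd : r ≤ infDist p K)
    (h : ∀ q ∈ closedBall p r, |infDist q K - a q| ≤ δ * r) :
    a.linear (z - p) ≤ -(1 - 2 * δ) * ‖z - p‖ := by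
  set d := ‖z - p‖
  have hd : dist p z = d := dist_eq_norm' p z
  set t := r / d
  have ht : 0 < t := div_pos hr (by linarith)
  have htd : t * d = r := div_mul_cancel₀ r (by linarith)
  have hnorm : ‖t • (z - p)‖ = r := by rw [norm_smul, Real.norm_of_nonneg ht.le, htd]
  have hdrop : infDist (p + t • (z - p)) K ≤ (1 - t) * d := by
    rw [← hd, add_comm, ← AffineMap.lineMap_apply_module']
    exact infDist_lineMap_le hz p (by rw [div_le_one (by linarith)]; linarith)
  have happrox := (abs_le.mp (abs_sub_sub_linear_le_of_approx h hnorm.le)).1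
  have hscaled : t * a.linear (z - p) ≤ t * (-(1 - 2 * δ) * d) := by
    have hrhs : t * (-(1 - 2 * δ) * d) = -(1 - 2 * δ) * r := by rw [← htd]; ring
    rw [← smul_eq_mul, ← map_smul, hrhs]
    linarith
  exact le_of_mul_le_mul_left hscaled ht

end Approximation

section LinearBounds

variable {E : Type*} [NormedAddCommGroup E] [InnerProductSpace ℝ E]

theorem cos_angle_ge_of_linear_bounds (L : E →ₗ[ℝ] ℝ) {α β : ℝ} (hα : 0 ≤ α) (hβ : 0 < β)
    (hL : ∀ v, |L v| ≤ β * ‖v‖) {x y : E} (hx : x ≠ 0) (hy : y ≠ 0)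
    (hLx : L x ≤ -α * ‖x‖) (hLy : L y ≤ -α * ‖y‖) :
    2 * (α / β) ^ 2 - 1 ≤ Real.cos (angle x y) := by
  set u := ‖x‖⁻¹ • x
  set w := ‖y‖⁻¹ • y
  have hu : ‖u‖ = 1 := norm_smul_inv_norm hx
  have hw : ‖w‖ = 1 := norm_smul_inv_norm hy
  have hL_unit {z : E} (hz : z ≠ 0) (hLz : L z ≤ -α * ‖z‖) : L (‖z‖⁻¹ • z) ≤ -α := by
    have hz' : 0 < ‖z‖ := norm_pos_iff.mpr hz
    rw [map_smul, smul_eq_mul, inv_mul_le_iff₀ hz']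
    linarith
  have hsum : 2 * (α / β) ≤ ‖u + w‖ := by
    have := hL (u + w)
    rw [map_add, abs_le] at this
    rw [mul_div_assoc', div_le_iff₀' hβ]
    linarith [hL_unit hx hLx, hL_unit hy hLy]
  have hcos : Real.cos (angle x y) = ⟪u, w⟫ := by
    rw [inner_eq_cos_angle_of_norm_eq_one hu hw, angle_smul_left_of_pos _ _ (by positivity),
      angle_smul_right_of_pos _ _ (by positivity)]
  have hnorm : ‖u + w‖ ^ 2 = 2 + 2 * ⟪u, w⟫ := by
    rw [norm_add_sq_real, hu, hw]; ring
  have hαβ : 0 ≤ α / β := div_nonneg hα hβ.le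
  nlinarith

theorem angle_le_arccos_of_linear_bounds (L : E →ₗ[ℝ] ℝ) {α β : ℝ} (hα : 0 ≤ α) (hβ : 0 < β)
    (hL : ∀ v, |L v| ≤ β * ‖v‖) {x y : E} (hx : x ≠ 0) (hy : y ≠ 0)
    (hLx : L x ≤ -α * ‖x‖) (hLy : L y ≤ -α * ‖y‖) :
    angle x y ≤ Real.arccos (2 * (α / β) ^ 2 - 1) := by
  rw [← Real.arccos_cos (angle_nonneg x y) (angle_le_pi x y)]
  exact Real.arccos_le_arccos (cos_angle_ge_of_linear_bounds L hα hβ hL hx hy hLx hLy)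

end LinearBounds

theorem not_coarse_differentiable_on_medial_axis_general (k : ℕ)
    (K : Set (EuclideanSpace ℝ (Fin k)))
    (p z₁ z₂ : EuclideanSpace ℝ (Fin k)) (hz₁ : z₁ ∈ K) (hz₂ : z₂ ∈ K)
    (hd₁ : dist p z₁ = Metric.infDist p K) (hd₂ : dist p z₂ = Metric.infDist p K)
    (δ : ℝ) (hδ : 0 < δ) (hδ1 : 2 * δ < 1)
    (hangle : Real.arccos (2 * ((1 - 2 * δ) / (1 + 2 * δ)) ^ 2 - 1) <
      InnerProductGeometry.angle (z₁ - p) (z₂ - p))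
    (r : ℝ) (hr : 0 < r) (hrd : r < Metric.infDist p K) :
    ¬ ∃ lam : EuclideanSpace ℝ (Fin k) →ᵃ[ℝ] ℝ,
      ∀ q ∈ Metric.closedBall p r, |Metric.infDist q K - lam q| ≤ δ * r := by
  rintro ⟨lam, hlam⟩
  have hL := abs_linear_le_of_approx (lipschitz_infDist_pt K) hr hlam
  have hLz₁ := linear_sub_le_of_approx_infDist hz₁ hd₁ hr hrd.le hlam
  have hLz₂ := linear_sub_le_of_approx_infDist hz₂ hd₂ hr hrd.le hlam
  have hne_p {z} (hd : dist p z = infDist p K) : z - p ≠ 0 :=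
    sub_ne_zero.mpr fun hzp ↦ by rw [hzp, dist_self] at hd; linarith
  have := angle_le_arccos_of_linear_bounds lam.linear (by linarith) (by linarith) hL
    (hne_p hd₁) (hne_p hd₂) hLz₁ hLz₂
  linarith

theorem not_coarse_differentiable_on_medial_axis (k : ℕ)
    (K : Set (EuclideanSpace ℝ (Fin k))) (hKc : IsCompact K) (hK : K.Nonempty)
    (p z₁ z₂ : EuclideanSpace ℝ (Fin k)) (hz₁ : z₁ ∈ K) (hz₂ : z₂ ∈ K)
    (hne : z₁ ≠ z₂)
    (hd₁ : dist p z₁ = Metric.infDist p K) (hd₂ : dist p z₂ = Metric.infDist p K)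
    (hθ₀ : 0 < InnerProductGeometry.angle (z₁ - p) (z₂ - p))
    (δ : ℝ) (hδ : 0 < δ) (hδ1 : 2 * δ < 1)
    (hangle : Real.arccos (2 * ((1 - 2 * δ) / (1 + 2 * δ)) ^ 2 - 1) <
      InnerProductGeometry.angle (z₁ - p) (z₂ - p))
    (r : ℝ) (hr : 0 < r) (hrd : r < Metric.infDist p K) :
    ¬ ∃ lam : EuclideanSpace ℝ (Fin k) →ᵃ[ℝ] ℝ,
      ∀ q ∈ Metric.closedBall p r, |Metric.infDist q K - lam q| ≤ δ * r :=
  not_coarse_differentiable_on_medial_axis_general k K p z₁ z₂ hz₁ hz₂ hd₁ hd₂ δ hδ hδ1 hangle r hr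
    hrd
end
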